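/- arXiv:math/0410332 — 5 statements merged into one kernel-verified Lean document; each statement's English description precedes it below -/
import Mathlib

section
/- The improper integral ∫₀^∞ (√(3x²+1) − √3·x)/(√2(x²+1)) dx converges, and exp of this integral equals (2√3)^{√(3/2)}·(√3 − √2). -/
/-!
For `a > 1` write `c = √(a - 1)`, `s = √(a x² + 1)` and `t = √(x² + 1)`, so that `s² = a t² - c²`.
Since `(log (√a x + s))' = √a / s` and `(log (s - c x))' = x / t² - c / (s t²)`, the function
`(√a / c) log ((√a x + s) / t) + log ((s - c x) / t)` is a primitive of the nonnegative integrand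
`(s - √a x) / (c t²)`. It vanishes at `0`, and as `x → ∞` we have `x / t → 1` and `s / t → √a`, so it
tends to `(√a / c) log (2√a) + log (√a - c)`, which is therefore the value of the integral over `[0, ∞)`.
Exponentiating at `a = 3` gives `(2√3)^√(3/2) (√3 - √2)`.
-/

open Real Filter Topology MeasureTheory Set

lemma sqrt_mul_abs_lt_sqrt {b d : ℝ} (hb : 0 ≤ b) (hbd : b ≤ d) (x : ℝ) :
    √b * |x| < √(d * x ^ 2 + 1) := by
  rw [← sqrt_sq_eq_abs, ← sqrt_mul hb]
  exact sqrt_lt_sqrt (by positivity) (by nlinarith [sq_nonneg x])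

lemma sqrt_mul_add_sqrt_pos {a : ℝ} (ha : 0 ≤ a) (x : ℝ) : 0 < √a * x + √(a * x ^ 2 + 1) := by
  nlinarith [sqrt_mul_abs_lt_sqrt ha le_rfl x, neg_abs_le x, sqrt_nonneg a]

lemma sqrt_sub_sqrt_sub_one_mul_pos {a : ℝ} (ha : 1 ≤ a) (x : ℝ) :
    0 < √(a * x ^ 2 + 1) - √(a - 1) * x := by
  nlinarith [sqrt_mul_abs_lt_sqrt (sub_nonneg.2 ha) (sub_le_self a zero_le_one) x, le_abs_self x,
    sqrt_nonneg (a - 1)]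

lemma hasDerivAt_sqrt_mul_sq_add_one {a : ℝ} (ha : 0 ≤ a) (x : ℝ) :
    HasDerivAt (fun x => √(a * x ^ 2 + 1)) (a * x / √(a * x ^ 2 + 1)) x := by
  have h := (((hasDerivAt_pow 2 x).const_mul a).add_const 1).sqrt (by positivity)
  convert h using 1
  ring

lemma hasDerivAt_log_sqrt_mul_add_sqrt {a : ℝ} (ha : 0 ≤ a) (x : ℝ) :
    HasDerivAt (fun x => log (√a * x + √(a * x ^ 2 + 1))) (√a / √(a * x ^ 2 + 1)) x := by
  have hpos := sqrt_mul_add_sqrt_pos ha x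
  have h := (((hasDerivAt_id' x).const_mul √a).add
    (hasDerivAt_sqrt_mul_sq_add_one ha x)).log hpos.ne'
  refine h.congr_deriv ?_
  simp only [Pi.add_apply, mul_one]
  rw [div_eq_div_iff hpos.ne' (by positivity)]
  field_simp
  linear_combination (-x) * sq_sqrt ha

lemma hasDerivAt_log_sqrt_sub_sqrt_sub_one_mul {a : ℝ} (ha : 1 ≤ a) (x : ℝ) :
    HasDerivAt (fun x => log (√(a * x ^ 2 + 1) - √(a - 1) * x))
      ((x * √(a * x ^ 2 + 1) - √(a - 1)) / (√(a * x ^ 2 + 1) * (x ^ 2 + 1))) x := by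
  have hpos := sqrt_sub_sqrt_sub_one_mul_pos ha x
  have h := ((hasDerivAt_sqrt_mul_sq_add_one (by linarith) x).sub
    ((hasDerivAt_id' x).const_mul √(a - 1))).log hpos.ne'
  refine h.congr_deriv ?_
  simp only [Pi.sub_apply, mul_one]
  rw [div_eq_div_iff hpos.ne' (by positivity)]
  field_simp
  linear_combination (-x) * sq_sqrt (by positivity : 0 ≤ a * x ^ 2 + 1) -
    x * sq_sqrt (sub_nonneg.2 ha)

lemma hasDerivAt_log_sqrt_sq_add_one (x : ℝ) :
    HasDerivAt (fun x => log √(x ^ 2 + 1)) (x / (x ^ 2 + 1)) x := by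
  have h := (((hasDerivAt_pow 2 x).add_const 1).log (by positivity)).div_const 2
  refine (h.congr_of_eventuallyEq (.of_forall fun y => log_sqrt (by positivity))).congr_deriv ?_
  field_simp
  ring

noncomputable def gapIntegrand (a x : ℝ) : ℝ :=
  (√(a * x ^ 2 + 1) - √a * x) / (√(a - 1) * (x ^ 2 + 1))

noncomputable def gapPrimitive (a x : ℝ) : ℝ :=
  √a / √(a - 1) * log ((√a * x + √(a * x ^ 2 + 1)) / √(x ^ 2 + 1)) +
    log ((√(a * x ^ 2 + 1) - √(a - 1) * x) / √(x ^ 2 + 1))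

lemma hasDerivAt_gapPrimitive {a : ℝ} (ha : 1 < a) (x : ℝ) :
    HasDerivAt (gapPrimitive a) (gapIntegrand a x) x := by
  have hF : gapPrimitive a = fun x => √a / √(a - 1) * (log (√a * x + √(a * x ^ 2 + 1)) -
      log √(x ^ 2 + 1)) + (log (√(a * x ^ 2 + 1) - √(a - 1) * x) - log √(x ^ 2 + 1)) := by
    funext y
    rw [gapPrimitive, log_div (sqrt_mul_add_sqrt_pos (by linarith) y).ne' (by positivity),
      log_div (sqrt_sub_sqrt_sub_one_mul_pos ha.le y).ne' (by positivity)]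
  have h := (((hasDerivAt_log_sqrt_mul_add_sqrt (by linarith) x).sub
    (hasDerivAt_log_sqrt_sq_add_one x)).const_mul (√a / √(a - 1))).add
    ((hasDerivAt_log_sqrt_sub_sqrt_sub_one_mul ha.le x).sub (hasDerivAt_log_sqrt_sq_add_one x))
  rw [hF]
  refine h.congr_deriv ?_
  have hc : 0 < √(a - 1) := sqrt_pos.2 (by linarith)
  have hs : 0 < √(a * x ^ 2 + 1) := sqrt_pos.2 (by nlinarith [sq_nonneg x])
  rw [gapIntegrand]
  field_simp
  linear_combination (x ^ 2 + 1) * sq_sqrt (by linarith : 0 ≤ a) - sq_sqrt (by linarith : 0 ≤ a - 1) -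
    sq_sqrt (by positivity : 0 ≤ a * x ^ 2 + 1)

lemma tendsto_sqrt_div_sqrt_sq_add_one (a b : ℝ) :
    Tendsto (fun x => √(a * x ^ 2 + b) / √(x ^ 2 + 1)) atTop (𝓝 √a) := by
  have hr : Tendsto (fun x : ℝ => (x ^ 2 + 1)⁻¹) atTop (𝓝 0) :=
    tendsto_inv_atTop_zero.comp (tendsto_atTop_add_const_right _ 1 (tendsto_pow_atTop two_ne_zero))
  have h := ((tendsto_const_nhds (x := a)).add (hr.const_mul (b - a))).sqrt
  rw [mul_zero, add_zero] at h
  refine h.congr fun x => ?_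
  rw [← sqrt_div' _ (by positivity)]
  congr 1
  field_simp
  ring

lemma tendsto_gapPrimitive {a : ℝ} (ha : 1 < a) :
    Tendsto (gapPrimitive a) atTop
      (𝓝 (√a / √(a - 1) * log (2 * √a) + log (√a - √(a - 1)))) := by
  have hu : Tendsto (fun x => x / √(x ^ 2 + 1)) atTop (𝓝 1) := by
    have h := tendsto_sqrt_div_sqrt_sq_add_one 1 0
    rw [sqrt_one] at h
    refine h.congr' ?_
    filter_upwards [eventually_ge_atTop 0] with x hx
    rw [one_mul, add_zero, sqrt_sq hx]
  have hv := tendsto_sqrt_div_sqrt_sq_add_one a 1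
  have hc : √(a - 1) < √a := sqrt_lt_sqrt (by linarith) (by linarith)
  have h := (((hu.const_mul √a).add hv).log (by positivity)).const_mul (√a / √(a - 1)) |>.add
    ((hv.sub (hu.const_mul √(a - 1))).log (by linarith))
  rw [mul_one, mul_one, ← two_mul] at h
  refine h.congr fun x => ?_
  rw [gapPrimitive, add_div, sub_div, mul_div_assoc, mul_div_assoc]

lemma gapPrimitive_zero (a : ℝ) : gapPrimitive a 0 = 0 := by
  simp [gapPrimitive]

lemma gapIntegrand_nonneg {a x : ℝ} (ha : 0 ≤ a) (hx : 0 ≤ x) : 0 ≤ gapIntegrand a x := by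
  have hax : √a * x ≤ √(a * x ^ 2 + 1) := by
    simpa only [abs_of_nonneg hx] using (sqrt_mul_abs_lt_sqrt ha le_rfl x).le
  exact div_nonneg (sub_nonneg.2 hax) (by positivity)

section

variable {a : ℝ} (ha : 1 < a)
include ha

theorem integrableOn_gapIntegrand : IntegrableOn (gapIntegrand a) (Ici 0) := by
  rw [integrableOn_Ici_iff_integrableOn_Ioi]
  exact integrableOn_Ioi_deriv_of_nonneg' (fun x _ => hasDerivAt_gapPrimitive ha x)
    (fun _ hx => gapIntegrand_nonneg (by linarith) hx.out.le) (tendsto_gapPrimitive ha)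

theorem integral_gapIntegrand :
    ∫ x in Ici 0, gapIntegrand a x = √a / √(a - 1) * log (2 * √a) + log (√a - √(a - 1)) := by
  rw [integral_Ici_eq_integral_Ioi, integral_Ioi_of_hasDerivAt_of_nonneg'
    (fun x _ => hasDerivAt_gapPrimitive ha x)
    (fun _ hx => gapIntegrand_nonneg (by linarith) hx.out.le) (tendsto_gapPrimitive ha),
    gapPrimitive_zero, sub_zero]

end

/-- The improper integral ∫₀^∞ (√(3x²+1) − √3 x)/(√2(x²+1)) dx converges,
    and exp of it equals (2√3)^{√(3/2)}·(√3 − √2). -/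
theorem constant_A_value :
    IntegrableOn
      (fun x : ℝ => (Real.sqrt (3 * x ^ 2 + 1) - Real.sqrt 3 * x) / (Real.sqrt 2 * (x ^ 2 + 1)))
      (Set.Ici 0) volume ∧
    Real.exp (∫ x in Set.Ici (0:ℝ),
        (Real.sqrt (3 * x ^ 2 + 1) - Real.sqrt 3 * x) / (Real.sqrt 2 * (x ^ 2 + 1)))
      = Real.rpow (2 * Real.sqrt 3) (Real.sqrt (3 / 2)) * (Real.sqrt 3 - Real.sqrt 2) := by
  have h3 : gapIntegrand 3 = fun x => (√(3 * x ^ 2 + 1) - √3 * x) / (√2 * (x ^ 2 + 1)) := by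
    funext x
    norm_num [gapIntegrand]
  have h32 : √(3 - 1 : ℝ) = √2 := by norm_num
  rw [← h3, integral_gapIntegrand (by norm_num), h32, ← sqrt_div' _ zero_le_two, exp_add,
    exp_log (sub_pos.2 (sqrt_lt_sqrt zero_le_two (by norm_num))),
    rpow_eq_pow, rpow_def_of_pos (by positivity), mul_comm (log _)]
  exact ⟨integrableOn_gapIntegrand (by norm_num), rfl⟩
end

section
/- The function u(x₀) = exp(∫₀^{x₀} √(3x²+1)/(√2(x²+1)) dx) satisfies u(x₀)/x₀^{√(3/2)} → A as x₀ → +∞, where A = exp(∫₀^∞ (√(3x²+1) − √3·x)/(√2(x²+1)) dx). -/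
/-!
Write the integrand as `g x + ν * x / (x ^ 2 + 1)` with `ν = √(3/2)`, where
`g x = (√(3x²+1) - √3 x) / (√2 (x²+1))` is `O(1/(x²+1))`, hence integrable on `[0, ∞)`.
The second summand integrates to `ν/2 · log (a² + 1)`, so `u a / a ^ ν` equals
`exp (∫₀ᵃ g + ν (log (a² + 1) / 2 - log a))`, and the bracket tends to `0`.
-/

open Real Filter MeasureTheory

noncomputable def u (a : ℝ) : ℝ :=
  Real.exp (∫ x in (0:ℝ)..a, Real.sqrt (3 * x ^ 2 + 1) / (Real.sqrt 2 * (x ^ 2 + 1)))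

open Set

theorem continuous_id_div_sq_add_one : Continuous fun x : ℝ => x / (x ^ 2 + 1) :=
  continuous_id.div (by fun_prop) fun x => by positivity

theorem integral_id_div_sq_add_one (a : ℝ) :
    ∫ x in (0:ℝ)..a, x / (x ^ 2 + 1) = log (a ^ 2 + 1) / 2 := by
  have hderiv (x : ℝ) : HasDerivAt (fun t => log (t ^ 2 + 1) / 2) (x / (x ^ 2 + 1)) x := by
    refine ((((hasDerivAt_pow 2 x).add_const 1).log (by positivity)).div_const 2).congr_deriv ?_
    push_cast
    ring
  rw [intervalIntegral.integral_eq_sub_of_hasDerivAt (fun x _ => hderiv x)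
    (continuous_id_div_sq_add_one.intervalIntegrable 0 a)]
  simp

theorem tendsto_half_log_sq_add_one_sub_log :
    Tendsto (fun a : ℝ => log (a ^ 2 + 1) / 2 - log a) atTop (nhds 0) := by
  have h := ((tendsto_log_comp_add_sub_log 1).comp (tendsto_pow_atTop two_ne_zero)).div_const 2
  rw [zero_div] at h
  refine h.congr fun a => ?_
  simp only [Function.comp_apply, log_pow]
  ring

theorem tendsto_exp_integral_add_mul_div_rpow {g : ℝ → ℝ} (hg : IntegrableOn g (Ioi 0))
    (ν : ℝ) :
    Tendsto (fun a : ℝ => exp (∫ x in (0:ℝ)..a, (g x + ν * (x / (x ^ 2 + 1)))) / a ^ ν) atTop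
      (nhds (exp (∫ x in Ioi 0, g x))) := by
  have hlim := (intervalIntegral_tendsto_integral_Ioi 0 hg tendsto_id).add
    (tendsto_half_log_sq_add_one_sub_log.const_mul ν)
  rw [mul_zero, add_zero] at hlim
  refine ((continuous_exp.tendsto _).comp hlim).congr' ?_
  filter_upwards [eventually_gt_atTop 0] with a ha
  have hga : IntervalIntegrable g volume 0 a :=
    (intervalIntegrable_iff_integrableOn_Ioc_of_le ha.le).mpr (hg.mono_set Ioc_subset_Ioi_self)
  have hid : IntervalIntegrable (fun x : ℝ => ν * (x / (x ^ 2 + 1))) volume 0 a :=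
    (continuous_id_div_sq_add_one.intervalIntegrable 0 a).const_mul ν
  rw [Function.comp_apply, id, intervalIntegral.integral_add hga hid,
    intervalIntegral.integral_const_mul, integral_id_div_sq_add_one, rpow_def_of_pos ha, ← exp_sub]
  congr 1
  ring

noncomputable def uRemainder (x : ℝ) : ℝ :=
  (√(3 * x ^ 2 + 1) - √3 * x) / (√2 * (x ^ 2 + 1))

theorem sqrt_three_mul_sq_add_one_sub_mem_Icc {x : ℝ} (hx : 0 ≤ x) :
    √(3 * x ^ 2 + 1) - √3 * x ∈ Icc 0 1 := by
  have h3 : √3 ^ 2 = 3 := sq_sqrt (by norm_num)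
  have hlow : √3 * x ≤ √(3 * x ^ 2 + 1) :=
    (le_sqrt (by positivity) (by positivity)).mpr (by nlinarith)
  have hup : √(3 * x ^ 2 + 1) ≤ √3 * x + 1 :=
    sqrt_le_iff.mpr ⟨by positivity, by nlinarith [sqrt_nonneg 3]⟩
  constructor <;> linarith

theorem abs_uRemainder_le {x : ℝ} (hx : 0 ≤ x) : |uRemainder x| ≤ (1 + x ^ 2)⁻¹ := by
  obtain ⟨hnum₀, hnum₁⟩ := sqrt_three_mul_sq_add_one_sub_mem_Icc hx
  have hden : 1 + x ^ 2 ≤ √2 * (x ^ 2 + 1) := by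
    nlinarith [one_le_sqrt.mpr (show (1:ℝ) ≤ 2 by norm_num)]
  rw [uRemainder, abs_of_nonneg (by positivity), ← one_div]
  exact div_le_div₀ zero_le_one hnum₁ (by positivity) hden

theorem continuous_uRemainder : Continuous uRemainder :=
  Continuous.div (by fun_prop) (by fun_prop) fun x => by positivity

theorem integrableOn_uRemainder : IntegrableOn uRemainder (Ioi 0) := by
  refine integrable_inv_one_add_sq.integrableOn.mono'
    continuous_uRemainder.aestronglyMeasurable.restrict ?_
  filter_upwards [ae_restrict_mem measurableSet_Ioi] with x hx
  exact abs_uRemainder_le hx.le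

theorem u_integrand_eq (x : ℝ) :
    √(3 * x ^ 2 + 1) / (√2 * (x ^ 2 + 1)) = uRemainder x + √(3 / 2) * (x / (x ^ 2 + 1)) := by
  rw [uRemainder, sqrt_div' 3 zero_le_two]
  field_simp
  ring

/-- u(x₀)/x₀^{√(3/2)} → A as x₀ → +∞, where
    A = exp(∫₀^∞ (√(3x²+1) − √3 x)/(√2(x²+1)) dx). -/
theorem u_asymptotics :
    Tendsto (fun a : ℝ => u a / Real.rpow a (Real.sqrt (3 / 2))) atTop
      (nhds (Real.exp (∫ x in Set.Ici (0:ℝ),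
        (Real.sqrt (3 * x ^ 2 + 1) - Real.sqrt 3 * x) / (Real.sqrt 2 * (x ^ 2 + 1))))) := by
  simp only [u, u_integrand_eq]
  rw [integral_Ici_eq_integral_Ioi]
  exact tendsto_exp_integral_add_mul_div_rpow integrableOn_uRemainder _
end

section
/- On the quadric sheet {Q = 1, x₀ > 0} in ℝ³, let v = v(x₀) satisfy dv/dx₀ = (√(3x₀²−1)/(√2(x₀²−1)))·v for x₀ > 1. Then the function H/v is strictly increasing in x₀ on (1,∞), where H = x₀r² and r² = 2x₀² − 2 on this quadric. Equivalently, d/dx₀(H/v) = (p²/v)(p² − x₀) > 0, where p² = √(4x₀² + r²). -/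
open Real Set

/-!
With `H x = x (2x² - 2)`, one has `H' = 6x² - 2 = p⁴` where `p² = √(6x² - 2)`, and the
logarithmic derivative `k` of `v` satisfies `k H = x p²`. The quotient rule for `v' = k v` then
gives `(H / v)' = (H' - k H) / v = (p² / v) (p² - x)`, which is positive because
`p⁴ = 6x² - 2 > x²` for `x > 1`.
-/

theorem strictMonoOn_of_hasDerivAt_pos {s : Set ℝ} (hs : Convex ℝ s) {f f' : ℝ → ℝ}
    (hf : ∀ x ∈ s, HasDerivAt f (f' x) x) (hf' : ∀ x ∈ s, 0 < f' x) : StrictMonoOn f s :=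
  strictMonoOn_of_hasDerivWithinAt_pos hs
    (fun x hx => (hf x hx).continuousAt.continuousWithinAt)
    (fun x hx => (hf x (interior_subset hx)).hasDerivWithinAt)
    (fun x hx => hf' x (interior_subset hx))

theorem HasDerivAt.div_of_hasDerivAt_mul_self {𝕜 : Type*} [NontriviallyNormedField 𝕜]
    {f v : 𝕜 → 𝕜} {f' k x : 𝕜} (hf : HasDerivAt f f' x) (hv : HasDerivAt v (k * v x) x)
    (hv0 : v x ≠ 0) : HasDerivAt (fun y => f y / v y) ((f' - k * f x) / v x) x := by
  refine (hf.div hv hv0).congr_deriv ?_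
  field_simp

theorem hasDerivAt_mul_two_mul_sq_sub_two (x : ℝ) :
    HasDerivAt (fun x : ℝ => x * (2 * x ^ 2 - 2)) (6 * x ^ 2 - 2) x := by
  refine ((hasDerivAt_id' x).mul (((hasDerivAt_pow 2 x).const_mul 2).sub_const 2)).congr_deriv ?_
  push_cast
  ring

theorem sqrt_div_mul_mul_two_mul_sq_sub_two {x : ℝ} (hx : x ^ 2 ≠ 1) :
    √(3 * x ^ 2 - 1) / (√2 * (x ^ 2 - 1)) * (x * (2 * x ^ 2 - 2)) = x * √(6 * x ^ 2 - 2) := by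
  have hsqrt : √(6 * x ^ 2 - 2) = √2 * √(3 * x ^ 2 - 1) := by
    rw [← sqrt_mul zero_le_two]
    ring_nf
  have hx' : x ^ 2 - 1 ≠ 0 := sub_ne_zero.mpr hx
  rw [hsqrt]
  field_simp
  rw [sq_sqrt zero_le_two]

theorem sub_mul_sqrt_eq_sqrt_mul {a : ℝ} (ha : 0 ≤ a) (x : ℝ) :
    a - x * √a = √a * (√a - x) := by
  linear_combination -(sq_sqrt ha)

theorem lt_sqrt_six_mul_sq_sub_two {x : ℝ} (hx : 2 < 5 * x ^ 2) : x < √(6 * x ^ 2 - 2) :=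
  lt_sqrt_of_sq_lt (by linarith)

/-- On the quadric sheet {Q = 1, x₀ > 0}: if v solves
    dv/dx₀ = (√(3x₀²−1)/(√2(x₀²−1)))·v and v > 0 on (1,∞), then
    H/v = x₀(2x₀²−2)/v is strictly increasing on (1,∞), with
    d/dx₀(H/v) = (p²/v)(p² − x₀) > 0, where p² = √(6x₀²−2). -/
theorem H_over_v_strictMono (v : ℝ → ℝ)
    (hv : ∀ x ∈ Ioi (1:ℝ),
      HasDerivAt v (Real.sqrt (3 * x ^ 2 - 1) / (Real.sqrt 2 * (x ^ 2 - 1)) * v x) x)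
    (hvpos : ∀ x ∈ Ioi (1:ℝ), 0 < v x) :
    StrictMonoOn (fun x => x * (2 * x ^ 2 - 2) / v x) (Ioi 1) ∧
    ∀ x ∈ Ioi (1:ℝ),
      HasDerivAt (fun x => x * (2 * x ^ 2 - 2) / v x)
        (Real.sqrt (6 * x ^ 2 - 2) / v x * (Real.sqrt (6 * x ^ 2 - 2) - x)) x ∧
      0 < Real.sqrt (6 * x ^ 2 - 2) / v x * (Real.sqrt (6 * x ^ 2 - 2) - x) := by
  have hderiv : ∀ x ∈ Ioi (1:ℝ), HasDerivAt (fun x => x * (2 * x ^ 2 - 2) / v x)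
      (√(6 * x ^ 2 - 2) / v x * (√(6 * x ^ 2 - 2) - x)) x := by
    intro x (hx : 1 < x)
    have hquot := (hasDerivAt_mul_two_mul_sq_sub_two x).div_of_hasDerivAt_mul_self (hv x hx)
      (hvpos x hx).ne'
    rwa [sqrt_div_mul_mul_two_mul_sq_sub_two (by nlinarith),
      sub_mul_sqrt_eq_sqrt_mul (by nlinarith), mul_div_right_comm] at hquot
  have hpos : ∀ x ∈ Ioi (1:ℝ), 0 < √(6 * x ^ 2 - 2) / v x * (√(6 * x ^ 2 - 2) - x) := by
    intro x (hx : 1 < x)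
    have hlt : x < √(6 * x ^ 2 - 2) := lt_sqrt_six_mul_sq_sub_two (by nlinarith)
    exact mul_pos (div_pos (by linarith) (hvpos x hx)) (sub_pos.mpr hlt)
  exact ⟨strictMonoOn_of_hasDerivAt_pos (convex_Ioi 1) hderiv hpos,
    fun x hx => ⟨hderiv x hx, hpos x hx⟩⟩
end

section
/- Let f: [0,∞) → ℝ be a C² function with f''(v) ≥ k(1 + v^{λ−2}) for some k > 0 and λ > 2, and define Δ_f(v,v₀) = f(v) − f(v₀) − (v−v₀)f'(v₀). Then there exists c > 0 (depending only on k and λ) such that Δ_f(v,v₀) ≥ c((1+v)^{λ/2} − (1+v₀)^{λ/2})² for all v, v₀ ≥ 0. -/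
/-!
Put `q = (1 + v₀)^(λ/2)` and compare `f` with `H(x) = c((1 + x)^(λ/2) - q)²`, whose value and
first derivative vanish at `v₀`. Since `q ≥ 0` and `(1 + x)^(λ/2)` is convex,
`H'' ≤ c λ(λ-1)(1 + x)^(λ-2) ≤ c λ(λ-1) 2^(λ-2) (1 + x^(λ-2))`, which is `≤ f''` for
`c = k / (λ(λ-1) 2^(λ-2))`. Then `f - H` is convex on `[0, ∞)`, so its Taylor remainder is
nonnegative, i.e. `Δ_f(v, v₀) ≥ Δ_H(v, v₀) = H(v)`.
-/

open Real Set

lemma ConvexOn.mul_sub_le_sub_of_hasDerivWithinAt {D : Set ℝ} {f : ℝ → ℝ} {f' x y : ℝ}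
    (hf : ConvexOn ℝ D f) (hx : x ∈ D) (hy : y ∈ D) (hf' : HasDerivWithinAt f f' D x) :
    (y - x) * f' ≤ f y - f x := by
  rcases lt_trichotomy x y with hxy | rfl | hyx
  · have := hf.le_slope_of_hasDerivWithinAt hx hy hxy hf'
    rw [slope_def_field, le_div_iff₀ (sub_pos.2 hxy)] at this
    linarith
  · simp
  · have := hf.slope_le_of_hasDerivWithinAt hy hx hyx hf'
    rw [slope_def_field, div_le_iff₀ (sub_pos.2 hyx)] at this
    linarith

theorem sub_sub_mul_le_of_deriv2_le {D : Set ℝ} (hD : Convex ℝ D)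
    {f f' f'' g g' g'' : ℝ → ℝ}
    (hf : ∀ x ∈ D, HasDerivWithinAt f (f' x) D x)
    (hf' : ∀ x ∈ D, HasDerivWithinAt f' (f'' x) D x)
    (hg : ∀ x ∈ D, HasDerivWithinAt g (g' x) D x)
    (hg' : ∀ x ∈ D, HasDerivWithinAt g' (g'' x) D x)
    (hle : ∀ x ∈ D, g'' x ≤ f'' x) {v v₀ : ℝ} (hv : v ∈ D) (hv₀ : v₀ ∈ D) :
    g v - g v₀ - (v - v₀) * g' v₀ ≤ f v - f v₀ - (v - v₀) * f' v₀ := by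
  have hconv : ConvexOn ℝ D (f - g) := by
    refine convexOn_of_hasDerivWithinAt2_nonneg (f' := f' - g') (f'' := f'' - g'') hD
      (fun x hx => ((hf x hx).sub (hg x hx)).continuousWithinAt) (fun x hx => ?_)
      (fun x hx => ?_) (fun x hx => sub_nonneg.2 (hle x (interior_subset hx)))
    · exact ((hf x (interior_subset hx)).sub (hg x (interior_subset hx))).mono interior_subset
    · exact ((hf' x (interior_subset hx)).sub (hg' x (interior_subset hx))).mono interior_subset
  have := hconv.mul_sub_le_sub_of_hasDerivWithinAt hv₀ hv ((hf v₀ hv₀).sub (hg v₀ hv₀))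
  simp only [Pi.sub_apply] at this
  linarith

lemma hasDerivAt_one_add_rpow (μ : ℝ) {x : ℝ} (hx : -1 < x) :
    HasDerivAt (fun y => (1 + y) ^ μ) (μ * (1 + x) ^ (μ - 1)) x := by
  simpa using ((hasDerivAt_id' x).const_add 1).rpow_const (p := μ) (Or.inl (by linarith))

lemma one_add_rpow_le_two_rpow_mul {p x : ℝ} (hp : 0 ≤ p) (hx : 0 ≤ x) :
    (1 + x) ^ p ≤ 2 ^ p * (1 + x ^ p) := by
  have hxp : 0 ≤ x ^ p := rpow_nonneg hx p
  have h2p : 0 ≤ (2 : ℝ) ^ p := rpow_nonneg zero_le_two p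
  rcases le_total x 1 with hx1 | hx1
  · calc (1 + x) ^ p ≤ 2 ^ p := rpow_le_rpow (by linarith) (by linarith) hp
      _ ≤ 2 ^ p * (1 + x ^ p) := le_mul_of_one_le_right h2p (by linarith)
  · calc (1 + x) ^ p ≤ (2 * x) ^ p := rpow_le_rpow (by linarith) (by linarith) hp
      _ = 2 ^ p * x ^ p := mul_rpow zero_le_two hx
      _ ≤ 2 ^ p * (1 + x ^ p) := by gcongr; linarith

section Comparison

variable (μ q : ℝ) {x : ℝ}

lemma hasDerivAt_sq_one_add_rpow_sub (hx : -1 < x) :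
    HasDerivAt (fun y => ((1 + y) ^ μ - q) ^ 2)
      (2 * ((1 + x) ^ μ - q) * (μ * (1 + x) ^ (μ - 1))) x := by
  refine (((hasDerivAt_one_add_rpow μ hx).sub_const q).pow 2).congr_deriv ?_
  push_cast
  ring

lemma hasDerivAt_deriv_sq_one_add_rpow_sub (hx : -1 < x) :
    HasDerivAt (fun y => 2 * ((1 + y) ^ μ - q) * (μ * (1 + y) ^ (μ - 1)))
      (2 * ((μ * (1 + x) ^ (μ - 1)) ^ 2
        + ((1 + x) ^ μ - q) * (μ * (μ - 1) * (1 + x) ^ (μ - 2)))) x := by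
  have h := (((hasDerivAt_one_add_rpow μ hx).sub_const q).const_mul 2).mul
    ((hasDerivAt_one_add_rpow (μ - 1) hx).const_mul μ)
  refine h.congr_deriv ?_
  rw [show μ - 1 - 1 = μ - 2 by ring]
  ring

variable {μ q}

lemma deriv2_sq_one_add_rpow_sub_le (hμ : 1 ≤ μ) (hq : 0 ≤ q) (hx : -1 < x) :
    2 * ((μ * (1 + x) ^ (μ - 1)) ^ 2
        + ((1 + x) ^ μ - q) * (μ * (μ - 1) * (1 + x) ^ (μ - 2)))
      ≤ 2 * μ * (2 * μ - 1) * (1 + x) ^ (2 * μ - 2) := by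
  have ha : 0 < 1 + x := by linarith
  have hsq : ((1 + x) ^ (μ - 1)) ^ 2 = (1 + x) ^ (2 * μ - 2) := by
    rw [← rpow_natCast, ← rpow_mul ha.le]; ring_nf
  have hmul : (1 + x) ^ μ * (1 + x) ^ (μ - 2) = (1 + x) ^ (2 * μ - 2) := by
    rw [← rpow_add ha]; ring_nf
  have hq_mul_nonneg : 0 ≤ q * (μ * (μ - 1) * (1 + x) ^ (μ - 2)) := by
    have := rpow_nonneg ha.le (μ - 2)
    have : 0 ≤ μ - 1 := by linarith
    positivity
  linear_combination (2 * μ ^ 2) * hsq + (2 * μ * (μ - 1)) * hmul + 2 * hq_mul_nonneg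

lemma deriv2_sq_one_add_rpow_half_sub_le {lam : ℝ} (hlam : 2 < lam) (hq : 0 ≤ q)
    (hx : 0 ≤ x) :
    2 * ((lam / 2 * (1 + x) ^ (lam / 2 - 1)) ^ 2
        + ((1 + x) ^ (lam / 2) - q) * (lam / 2 * (lam / 2 - 1) * (1 + x) ^ (lam / 2 - 2)))
      ≤ lam * (lam - 1) * 2 ^ (lam - 2) * (1 + x ^ (lam - 2)) := by
  have h := deriv2_sq_one_add_rpow_sub_le (μ := lam / 2) (by linarith) hq (by linarith)
  rw [mul_div_cancel₀ lam two_ne_zero] at h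
  have hlam₁ : 0 ≤ lam * (lam - 1) := by nlinarith
  calc _ ≤ lam * (lam - 1) * (1 + x) ^ (lam - 2) := h
    _ ≤ lam * (lam - 1) * (2 ^ (lam - 2) * (1 + x ^ (lam - 2))) :=
        mul_le_mul_of_nonneg_left (one_add_rpow_le_two_rpow_mul (by linarith) hx) hlam₁
    _ = _ := by ring

end Comparison

/-- Lemma 4: if f'' (v) ≥ k(1 + v^{λ−2}) on [0,∞) with k > 0 and λ > 2, then
    the Taylor remainder Δ_f(v,v₀) = f(v) − f(v₀) − (v−v₀)f'(v₀) satisfies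
    Δ_f(v,v₀) ≥ c((1+v)^{λ/2} − (1+v₀)^{λ/2})², with c depending only on k, λ. -/
theorem taylor_remainder_lower_bound (k lam : ℝ) (hk : 0 < k) (hlam : 2 < lam) :
    ∃ c > 0, ∀ f f' f'' : ℝ → ℝ,
      (∀ v ∈ Ici (0:ℝ), HasDerivWithinAt f (f' v) (Ici 0) v) →
      (∀ v ∈ Ici (0:ℝ), HasDerivWithinAt f' (f'' v) (Ici 0) v) →
      (∀ v ∈ Ici (0:ℝ), k * (1 + v ^ (lam - 2)) ≤ f'' v) →
      ∀ v ∈ Ici (0:ℝ), ∀ v₀ ∈ Ici (0:ℝ),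
        c * ((1 + v) ^ (lam / 2) - (1 + v₀) ^ (lam / 2)) ^ 2
          ≤ f v - f v₀ - (v - v₀) * f' v₀ := by
  have hlam₁ : 0 < lam - 1 := by linarith
  have hden : 0 < lam * (lam - 1) * 2 ^ (lam - 2) := by
    have := rpow_pos_of_pos two_pos (lam - 2)
    have : 0 < lam := by linarith
    positivity
  set c := k / (lam * (lam - 1) * 2 ^ (lam - 2))
  have hc : 0 < c := div_pos hk hden
  refine ⟨c, hc, fun f f' f'' hf hf' hf'' v hv v₀ hv₀ => ?_⟩
  set q := (1 + v₀) ^ (lam / 2)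
  have hq : 0 ≤ q := rpow_nonneg (by linarith [mem_Ici.1 hv₀]) _
  have hx : ∀ x ∈ Ici (0 : ℝ), -1 < x := fun x hx => by linarith [mem_Ici.1 hx]
  have key := sub_sub_mul_le_of_deriv2_le (convex_Ici 0) hf hf'
    (fun x hx₀ => ((hasDerivAt_sq_one_add_rpow_sub (lam / 2) q (hx x hx₀)).const_mul
      c).hasDerivWithinAt)
    (fun x hx₀ => ((hasDerivAt_deriv_sq_one_add_rpow_sub (lam / 2) q (hx x hx₀)).const_mul
      c).hasDerivWithinAt)
    (fun x hx₀ => ?_) hv hv₀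
  · simpa [q] using key
  · calc c * _ ≤ c * (lam * (lam - 1) * 2 ^ (lam - 2) * (1 + x ^ (lam - 2))) :=
          mul_le_mul_of_nonneg_left (deriv2_sq_one_add_rpow_half_sub_le hlam hq hx₀) hc.le
      _ = k * (1 + x ^ (lam - 2)) := by simp only [c]; field_simp [hlam₁.ne']
      _ ≤ f'' x := hf'' x hx₀
end

section
/- For every v, v₀ ≥ 0 and λ > 2, the quantity v^λ − v₀^λ − λ(v−v₀)v₀^{λ−1} is nonnegative, and is bounded below by a positive constant (depending only on λ) times (v−v₀)²(v^{λ−2} + v₀^{λ−2}). -/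
open Real

set_option maxHeartbeats 1000000

private lemma bern_aux {t r : ℝ} (ht : 0 ≤ t) (hr : 1 ≤ r) :
    1 + r * (t - 1) ≤ t ^ r := by
  have := one_add_mul_self_le_rpow_one_add (s := t - 1) (by linarith) hr
  simpa using this

private lemma key_lemma (p : ℝ) (hp : 2 < p) :
    ∃ c : ℝ, 0 < c ∧ c ≤ 1 ∧ ∀ t : ℝ, 0 ≤ t →
      c * (t - 1) ^ 2 * (t ^ (p - 2) + 1) ≤ t ^ p - 1 - p * (t - 1) := by
  have hK : (0:ℝ) < (2:ℝ) ^ (p - 2) := Real.rpow_pos_of_pos (by norm_num) _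
  refine ⟨min (1/8) (min (1/2) (1 / ((2:ℝ) ^ (p - 2) + 1))), by positivity,
    le_trans (min_le_left _ _) (by norm_num), ?_⟩
  intro t ht
  set c := min (1/8) (min (1/2) (1 / ((2:ℝ) ^ (p - 2) + 1))) with hc
  have hc1 : c ≤ 1/8 := min_le_left _ _
  have hc2 : c ≤ 1/2 := le_trans (min_le_right _ _) (min_le_left _ _)
  have hc3 : c ≤ 1 / ((2:ℝ) ^ (p - 2) + 1) := le_trans (min_le_right _ _) (min_le_right _ _)
  have hcpos : 0 < c := by positivity
  -- step A : (t^(p/2) - 1)^2 ≤ t^p - 1 - p*(t-1)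
  have hXsq : t ^ (p/2) * t ^ (p/2) = t ^ p := by
    rw [← Real.rpow_add' ht (by linarith)]; norm_num
  have hbern : 1 + (p/2) * (t - 1) ≤ t ^ (p/2) := bern_aux ht (by linarith)
  have stepA : (t ^ (p/2) - 1) ^ 2 ≤ t ^ p - 1 - p * (t - 1) := by
    nlinarith [hXsq, hbern]
  have hXnn : 0 ≤ t ^ (p/2) := Real.rpow_nonneg ht _
  have hYnn : 0 ≤ t ^ (p - 2) := Real.rpow_nonneg ht _
  -- step B : c * (t-1)^2 * (t^(p-2)+1) ≤ (t^(p/2)-1)^2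
  have stepB : c * (t - 1) ^ 2 * (t ^ (p - 2) + 1) ≤ (t ^ (p/2) - 1) ^ 2 := by
    rcases le_or_gt t 1 with h1 | h1
    · rcases eq_or_lt_of_le ht with h0 | h0
      · -- t = 0
        rw [← h0, Real.zero_rpow (by linarith : p - 2 ≠ 0),
          Real.zero_rpow (by positivity : p/2 ≠ 0)]
        nlinarith
      · have hXle : t ^ (p/2) ≤ t := by
          have := Real.rpow_le_rpow_of_exponent_ge h0 h1 (show (1:ℝ) ≤ p/2 by linarith)
          simpa using this
        have hY1 : t ^ (p - 2) ≤ 1 := Real.rpow_le_one ht h1 (by linarith)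
        nlinarith [mul_nonneg (mul_nonneg hcpos.le (sq_nonneg (t-1)))
            (by linarith : (0:ℝ) ≤ 1 - t ^ (p - 2)),
          mul_nonneg (by linarith : (0:ℝ) ≤ 1 - 2*c) (sq_nonneg (t-1)),
          mul_nonneg (by linarith : (0:ℝ) ≤ t - t ^ (p/2))
            (by linarith : (0:ℝ) ≤ 2 - t ^ (p/2) - t)]
    · rcases le_or_gt t 2 with h2 | h2
      · -- 1 < t ≤ 2
        have hX1 : t - 1 ≤ t ^ (p/2) - 1 := by nlinarith [hbern]
        have hY2 : t ^ (p - 2) ≤ (2:ℝ) ^ (p - 2) := Real.rpow_le_rpow ht h2 (by linarith)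
        have h3 : c * ((2:ℝ) ^ (p-2) + 1) ≤ 1 := by
          rw [div_eq_mul_inv, one_mul] at hc3
          calc c * ((2:ℝ) ^ (p-2) + 1) ≤ ((2:ℝ) ^ (p-2) + 1)⁻¹ * ((2:ℝ) ^ (p-2) + 1) :=
                mul_le_mul_of_nonneg_right hc3 (by positivity)
            _ = 1 := by field_simp
        have g1 : c * (t ^ (p-2) + 1) ≤ 1 := by
          nlinarith [mul_le_mul_of_nonneg_left hY2 hcpos.le]
        have g2 : c * (t-1)^2 * (t ^ (p-2) + 1) ≤ (t-1)^2 := by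
          nlinarith [mul_le_mul_of_nonneg_right g1 (sq_nonneg (t-1))]
        have g3 : (t-1)^2 ≤ (t ^ (p/2) - 1)^2 := by nlinarith [hX1]
        linarith
      · -- 2 < t
        have hX2 : (2:ℝ) ≤ t ^ (p/2) := by
          calc (2:ℝ) = 2 ^ (1:ℝ) := by rw [Real.rpow_one]
            _ ≤ (2:ℝ) ^ (p/2) := Real.rpow_le_rpow_of_exponent_le (by norm_num) (by linarith)
            _ ≤ t ^ (p/2) := Real.rpow_le_rpow (by norm_num) h2.le (by positivity)
        have hY1 : (1:ℝ) ≤ t ^ (p - 2) := Real.one_le_rpow (by linarith) (by linarith)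
        have htp : t ^ (2:ℕ) * t ^ (p - 2) = t ^ p := by
          rw [← Real.rpow_natCast t 2, ← Real.rpow_add' ht (by norm_num; linarith)]
          norm_num
        have e1 : (t-1)^2 ≤ t^2 := by nlinarith
        have e2 : t ^ (p-2) + 1 ≤ 2 * t ^ (p-2) := by linarith
        have g1 : (c * (t-1)^2) * (t ^ (p-2) + 1) ≤ (c * t^2) * (2 * t ^ (p-2)) :=
          mul_le_mul (mul_le_mul_of_nonneg_left e1 hcpos.le) e2 (by positivity)
            (by positivity)
        have g2 : (c * t^2) * (2 * t ^ (p-2)) ≤ (1/4) * t ^ p := by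
          have h8 : (0:ℝ) ≤ 1/8 - c := by linarith
          nlinarith [mul_nonneg h8 (Real.rpow_nonneg ht p), htp]
        have g3 : (1/4) * t ^ p ≤ (t ^ (p/2) - 1)^2 := by
          nlinarith [hXsq, hX2]
        linarith
  linarith

/-- Convexity estimate: for λ > 2 and v, v₀ ≥ 0, the Taylor remainder
    v^λ − v₀^λ − λ(v−v₀)v₀^{λ−1} is nonnegative and bounded below by a
    positive constant (depending only on λ) times (v−v₀)²(v^{λ−2}+v₀^{λ−2}). -/
theorem rpow_taylor_remainder_bound (lam : ℝ) (hlam : 2 < lam) :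
    (∀ v v₀ : ℝ, 0 ≤ v → 0 ≤ v₀ →
      0 ≤ v ^ lam - v₀ ^ lam - lam * (v - v₀) * v₀ ^ (lam - 1)) ∧
    ∃ c > 0, ∀ v v₀ : ℝ, 0 ≤ v → 0 ≤ v₀ →
      c * (v - v₀) ^ 2 * (v ^ (lam - 2) + v₀ ^ (lam - 2))
        ≤ v ^ lam - v₀ ^ lam - lam * (v - v₀) * v₀ ^ (lam - 1) := by
  obtain ⟨c, hcpos, hc1, hkey⟩ := key_lemma lam hlam
  have main : ∀ v v₀ : ℝ, 0 ≤ v → 0 ≤ v₀ →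
      c * (v - v₀) ^ 2 * (v ^ (lam - 2) + v₀ ^ (lam - 2))
        ≤ v ^ lam - v₀ ^ lam - lam * (v - v₀) * v₀ ^ (lam - 1) := by
    intro v v₀ hv hv₀
    rcases eq_or_lt_of_le hv₀ with h0 | hb
    · -- v₀ = 0
      rw [← h0, Real.zero_rpow (by linarith : lam ≠ 0),
        Real.zero_rpow (by linarith : lam - 2 ≠ 0),
        Real.zero_rpow (by linarith : lam - 1 ≠ 0)]
      have hvp : v ^ (2:ℕ) * v ^ (lam - 2) = v ^ lam := by
        rw [← Real.rpow_natCast v 2, ← Real.rpow_add' hv (by norm_num; linarith)]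
        norm_num
      have hvnn : 0 ≤ v ^ lam := Real.rpow_nonneg hv _
      nlinarith [mul_nonneg (by linarith : (0:ℝ) ≤ 1 - c) hvnn]
    · -- v₀ > 0
      set t := v / v₀ with hts
      have ht : 0 ≤ t := div_nonneg hv hb.le
      have htv : t * v₀ = v := div_mul_cancel₀ v hb.ne'
      have key := hkey t ht
      have hbp : 0 < v₀ ^ lam := Real.rpow_pos_of_pos hb _
      have e1 : v₀ ^ lam = v₀ ^ (2:ℕ) * v₀ ^ (lam - 2) := by
        rw [← Real.rpow_natCast v₀ 2, ← Real.rpow_add hb]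
        norm_num
      have e2 : v₀ ^ lam = v₀ * v₀ ^ (lam - 1) := by
        nth_rewrite 2 [← Real.rpow_one v₀]
        rw [← Real.rpow_add hb]
        norm_num
      have scaled := mul_le_mul_of_nonneg_right key hbp.le
      rw [← htv]
      simp only [Real.mul_rpow ht hb.le]
      calc c * (t * v₀ - v₀) ^ 2 * (t ^ (lam - 2) * v₀ ^ (lam - 2) + v₀ ^ (lam - 2))
          = (c * (t - 1) ^ 2 * (t ^ (lam - 2) + 1)) * v₀ ^ lam := by rw [e1]; ring
        _ ≤ (t ^ lam - 1 - lam * (t - 1)) * v₀ ^ lam := scaled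
        _ = t ^ lam * v₀ ^ lam - v₀ ^ lam - lam * (t * v₀ - v₀) * v₀ ^ (lam - 1) := by
            rw [e2]; ring
  refine ⟨fun v v₀ hv hv₀ => ?_, c, hcpos, main⟩
  have := main v v₀ hv hv₀
  have hnn : 0 ≤ c * (v - v₀) ^ 2 * (v ^ (lam - 2) + v₀ ^ (lam - 2)) := by
    have := Real.rpow_nonneg hv (lam - 2)
    have := Real.rpow_nonneg hv₀ (lam - 2)
    positivity
  linarith
end
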